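/- Let $\rho_p > 0$, $\nu_p \in \mathbb{R}$, $\tilde\nu_c < 0$, $\tilde\rho_c \in \mathbb{R}$, $\alpha, \gamma > 0$, $\delta_p \in (0,1]$. Suppose $\tilde\rho_c + \nu_p - |\nu_p| - \frac{1}{2\alpha} \geq 0$. Then for all vectors $w, y_p, \tilde y_c, e_p \in \mathbb{R}^m$ with $\|e_p\|_2^2 \leq \delta_p \|y_p\|_2^2$: $(w - \tilde y_c)^T y_p - \nu_p \|w - \tilde y_c\|_2^2 - \rho_p \|y_p\|_2^2 + (y_p - e_p)^T \tilde y_c - \tilde\nu_c \|y_p - e_p\|_2^2 - \tilde\rho_c \|\tilde y_c\|_2^2 \leq (\gamma + |\nu_p| - \nu_p)\|w\|_2^2 - \big(\rho_p + 2\tilde\nu_c - \delta_p(\tfrac{\alpha}{2} - 2\tilde\nu_c) - \tfrac{1}{4\gamma}\big)\|y_p\|_2^2$. -/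

import Mathlib

/-!
After the cross terms `⟪ỹc, yp⟫` cancel, each remaining indefinite term is bounded separately:
`⟪w, yp⟫` and `-⟪ep, ỹc⟫` by Young's inequality with weights `γ` and `α / 2`, and the two
output-feedback terms `-ν ‖x - y‖²` by `(|ν| - ν) (‖x‖² + ‖y‖²)`. The resulting multiple of
`‖ỹc‖²` is nonpositive by the stability condition, and `‖ep‖²` is traded for `δp ‖yp‖²`
by the triggering condition.
-/

section

variable {E : Type*} [NormedAddCommGroup E] [InnerProductSpace ℝ E]

theorem real_inner_le_mul_norm_sq_add {ε : ℝ} (hε : 0 < ε) (x y : E) :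
    inner ℝ x y ≤ ε * ‖x‖ ^ 2 + 1 / (4 * ε) * ‖y‖ ^ 2 := by
  have hsq : 0 ≤ (2 * ε * ‖x‖ - ‖y‖) ^ 2 / (4 * ε) := by positivity
  have hexpand : (2 * ε * ‖x‖ - ‖y‖) ^ 2 / (4 * ε)
      = ε * ‖x‖ ^ 2 + 1 / (4 * ε) * ‖y‖ ^ 2 - ‖x‖ * ‖y‖ := by
    field_simp
    ring
  linarith [real_inner_le_norm x y]

theorem neg_mul_norm_sub_sq_le (ν : ℝ) (x y : E) :
    -ν * ‖x - y‖ ^ 2 ≤ (|ν| - ν) * (‖x‖ ^ 2 + ‖y‖ ^ 2) := by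
  rcases le_or_gt 0 ν with hν | hν
  · rw [abs_of_nonneg hν, sub_self, zero_mul]
    nlinarith [sq_nonneg ‖x - y‖]
  · have hpar := parallelogram_law_with_norm ℝ x y
    rw [abs_of_neg hν]
    nlinarith [sq_nonneg ‖x + y‖]

end

theorem stmt_12_general (m : ℕ) (ρp νp νc ρc α γ δp : ℝ)
    (hνc : νc < 0) (hα : 0 < α) (hγ : 0 < γ)
    (hstab : 0 ≤ ρc + νp - |νp| - 1 / (2 * α)) :
    ∀ w yp yc ep : EuclideanSpace ℝ (Fin m), ‖ep‖ ^ 2 ≤ δp * ‖yp‖ ^ 2 →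
      (inner ℝ (w - yc) yp : ℝ) - νp * ‖w - yc‖ ^ 2 - ρp * ‖yp‖ ^ 2
        + (inner ℝ (yp - ep) yc : ℝ) - νc * ‖yp - ep‖ ^ 2 - ρc * ‖yc‖ ^ 2
      ≤ (γ + |νp| - νp) * ‖w‖ ^ 2
        - (ρp + 2 * νc - δp * (α / 2 - 2 * νc) - 1 / (4 * γ)) * ‖yp‖ ^ 2 := by
  intro w yp yc ep hep
  have hcross : inner ℝ (w - yc) yp + inner ℝ (yp - ep) yc
      = inner ℝ w yp + inner ℝ (-ep) yc := by
    rw [inner_sub_left, inner_sub_left, inner_neg_left, real_inner_comm yc yp]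
    ring
  have hyoung_w := real_inner_le_mul_norm_sq_add hγ w yp
  have hyoung_e := real_inner_le_mul_norm_sq_add (half_pos hα) (-ep) yc
  rw [norm_neg, show 4 * (α / 2) = 2 * α by ring] at hyoung_e
  have hplant := neg_mul_norm_sub_sq_le νp w yc
  have hctrl := neg_mul_norm_sub_sq_le νc yp ep
  rw [abs_of_neg hνc] at hctrl
  have hstab_yc : 0 ≤ (ρc + νp - |νp| - 1 / (2 * α)) * ‖yc‖ ^ 2 := by positivity
  have htrigger : (α / 2 - 2 * νc) * ‖ep‖ ^ 2 ≤ (α / 2 - 2 * νc) * (δp * ‖yp‖ ^ 2) :=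
    mul_le_mul_of_nonneg_left hep (by linarith)
  linarith

theorem stmt_12 (m : ℕ) (ρp νp νc ρc α γ δp : ℝ)
    (hρp : 0 < ρp) (hνc : νc < 0) (hα : 0 < α) (hγ : 0 < γ)
    (hδ0 : 0 < δp) (hδ1 : δp ≤ 1)
    (hstab : 0 ≤ ρc + νp - |νp| - 1 / (2 * α)) :
    ∀ w yp yc ep : EuclideanSpace ℝ (Fin m), ‖ep‖ ^ 2 ≤ δp * ‖yp‖ ^ 2 →
      (inner ℝ (w - yc) yp : ℝ) - νp * ‖w - yc‖ ^ 2 - ρp * ‖yp‖ ^ 2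
        + (inner ℝ (yp - ep) yc : ℝ) - νc * ‖yp - ep‖ ^ 2 - ρc * ‖yc‖ ^ 2
      ≤ (γ + |νp| - νp) * ‖w‖ ^ 2
        - (ρp + 2 * νc - δp * (α / 2 - 2 * νc) - 1 / (4 * γ)) * ‖yp‖ ^ 2 :=
  stmt_12_general m ρp νp νc ρc α γ δp hνc hα hγ hstab
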